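/- Let p, q, u be probability distributions on a finite set X such that p(x) ≥ α₁, q(x) ≥ α₁, and u(x) ≥ α₂ for all x ∈ X, where α₁, α₂ ∈ (0,1). Then D_KL(p ‖ u) − D_KL(q ‖ u) ≤ (1 + log(1/min{α₁, α₂})) · Σ_x |p(x) − q(x)|. -/
import Mathlib


open Finset

/-- Kullback–Leibler divergence between probability mass functions on a finite type. -/
noncomputable def KLdiv {X : Type*} [Fintype X] (p q : X → ℝ) : ℝ :=
  ∑ x, p x * Real.log (p x / q x)

lemma kl_pointwise (a b c m : ℝ) (hm : 0 < m) (ha : m ≤ a) (hb : m ≤ b) (hc : m ≤ c)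
    (ha1 : a ≤ 1) (hc1 : c ≤ 1) :
    a * Real.log (a / c) - b * Real.log (b / c) ≤ (1 + Real.log (1 / m)) * |a - b| := by
  have ha0 : 0 < a := hm.trans_le ha
  have hb0 : 0 < b := hm.trans_le hb
  have hc0 : 0 < c := hm.trans_le hc
  have h1 : Real.log (a / b) ≤ a / b - 1 := Real.log_le_sub_one_of_pos (div_pos ha0 hb0)
  have h1' : b * Real.log (a / b) ≤ a - b := by
    have h2 : b * (a / b - 1) = a - b := by field_simp
    nlinarith [mul_le_mul_of_nonneg_left h1 hb0.le]
  have hstep : a * Real.log (a / c) - b * Real.log (b / c)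
      ≤ (a - b) * (1 + Real.log (a / c)) := by
    rw [Real.log_div ha0.ne' hc0.ne', Real.log_div hb0.ne' hc0.ne']
    rw [Real.log_div ha0.ne' hb0.ne'] at h1'
    nlinarith
  have habs : |Real.log (a / c)| ≤ Real.log (1 / m) := by
    rw [abs_le]
    constructor
    · have hmac : m ≤ a / c := le_trans ha (by rw [le_div_iff₀ hc0]; nlinarith)
      have := Real.log_le_log hm hmac
      rw [one_div, Real.log_inv]
      linarith
    · have hac : a / c ≤ 1 / m := by rw [div_le_div_iff₀ hc0 hm]; nlinarith
      exact Real.log_le_log (div_pos ha0 hc0) hac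
  calc a * Real.log (a / c) - b * Real.log (b / c)
      ≤ (a - b) * (1 + Real.log (a / c)) := hstep
    _ ≤ |(a - b) * (1 + Real.log (a / c))| := le_abs_self _
    _ = |a - b| * |1 + Real.log (a / c)| := abs_mul _ _
    _ ≤ |a - b| * (1 + Real.log (1 / m)) := by
        apply mul_le_mul_of_nonneg_left _ (abs_nonneg _)
        calc |1 + Real.log (a / c)| ≤ |1| + |Real.log (a / c)| := abs_add_le _ _
          _ ≤ 1 + Real.log (1 / m) := by rw [abs_one]; linarith
    _ = (1 + Real.log (1 / m)) * |a - b| := mul_comm _ _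

theorem stmt10 {X : Type*} [Fintype X]
    (p q u : X → ℝ) (α₁ α₂ : ℝ)
    (hα₁ : α₁ ∈ Set.Ioo (0:ℝ) 1) (hα₂ : α₂ ∈ Set.Ioo (0:ℝ) 1)
    (hp : (∀ x, α₁ ≤ p x) ∧ ∑ x, p x = 1)
    (hq : (∀ x, α₁ ≤ q x) ∧ ∑ x, q x = 1)
    (hu : (∀ x, α₂ ≤ u x) ∧ ∑ x, u x = 1) :
    KLdiv p u - KLdiv q u ≤ (1 + Real.log (1 / min α₁ α₂)) * ∑ x, |p x - q x| := by
  obtain ⟨hα₁0, hα₁1⟩ := hα₁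
  obtain ⟨hα₂0, hα₂1⟩ := hα₂
  obtain ⟨hp1, hp2⟩ := hp
  obtain ⟨hq1, hq2⟩ := hq
  obtain ⟨hu1, hu2⟩ := hu
  set m := min α₁ α₂ with hmdef
  have hm0 : 0 < m := lt_min hα₁0 hα₂0
  have hple : ∀ x, p x ≤ 1 := fun x => hp2 ▸
    Finset.single_le_sum (fun y _ => le_trans hα₁0.le (hp1 y)) (mem_univ x)
  have hqle : ∀ x, q x ≤ 1 := fun x => hq2 ▸
    Finset.single_le_sum (fun y _ => le_trans hα₁0.le (hq1 y)) (mem_univ x)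
  have hule : ∀ x, u x ≤ 1 := fun x => hu2 ▸
    Finset.single_le_sum (fun y _ => le_trans hα₂0.le (hu1 y)) (mem_univ x)
  have : KLdiv p u - KLdiv q u
      = ∑ x, (p x * Real.log (p x / u x) - q x * Real.log (q x / u x)) := by
    rw [KLdiv, KLdiv, ← Finset.sum_sub_distrib]
  rw [this, mul_sum]
  apply Finset.sum_le_sum
  intro x _
  exact kl_pointwise (p x) (q x) (u x) m hm0
    (le_trans (min_le_left _ _) (hp1 x)) (le_trans (min_le_left _ _) (hq1 x))
    (le_trans (min_le_right _ _) (hu1 x)) (hple x) (hule x)
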